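/- arXiv:1811.10803 — 2 statements merged into one kernel-verified Lean document; each statement's English description precedes it below -/
import Mathlib

section
/- The logical statement 'g(z) < 0 implies f(z) = 0' holds if and only if there exists σ ≥ 0 such that g(z) + σ ≥ 0, σ ≥ 0, and σ·f(z) = 0. -/
/-- The state-triggered constraint `g(z) < 0 → f(z) = 0` holds iff there exists a
slack `σ ≥ 0` with `g(z) + σ ≥ 0`, `σ ≥ 0`, and `σ·f(z) = 0`. -/
theorem stc_iff_slack {n : ℕ} (g f : (Fin n → ℝ) → ℝ) (z : Fin n → ℝ) :
    (g z < 0 → f z = 0) ↔ ∃ σ : ℝ, 0 ≤ σ ∧ g z + σ ≥ 0 ∧ σ * f z = 0 := by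
  constructor
  · intro h
    by_cases hg : g z < 0
    · exact ⟨-g z, by linarith, by linarith, by simp [h hg]⟩
    · exact ⟨0, le_refl 0, by simpa using not_lt.mp hg, by simp⟩
  · rintro ⟨σ, hσ, hgs, hmul⟩ hg
    have : σ ≠ 0 := by intro h; rw [h] at hgs; linarith
    rcases mul_eq_zero.mp hmul with h | h
    · exact absurd h this
    · exact h
end

section
/- A state-triggered constraint with inequality constraint condition, i.e. g(z) < 0 → f(z) ≤ 0, is satisfied if and only if -min(g(z),0)·f(z) ≤ 0. -/
/-- The inequality-form STC `g(z) < 0 → f(z) ≤ 0` holds iff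
`-min(g(z),0)·f(z) ≤ 0`. -/
theorem cstc_ineq_iff_stc_ineq {n : ℕ} (g f : (Fin n → ℝ) → ℝ) (z : Fin n → ℝ) :
    (g z < 0 → f z ≤ 0) ↔ -min (g z) 0 * f z ≤ 0 := by
  rcases lt_or_ge (g z) 0 with h | h
  · rw [min_eq_left h.le]
    constructor
    · intro H
      have := H h
      nlinarith
    · intro H _
      nlinarith
  · rw [min_eq_right h]
    simp
    intro hg
    linarith
end
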